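/- arXiv:2201.09257 — 2 statements merged into one kernel-verified Lean document; each statement's English description precedes it below -/
import Mathlib

section
/- Call a linear map Γ : M_{d_A}(ℂ) → M_{d_B}(ℂ) a PPT-binding subchannel if it is completely positive, trace non-increasing (Tr Γ(ρ) ≤ 1 for every state ρ), and (id_k ⊗ Γ)(X) is PPT for every positive semidefinite X and every k ∈ ℕ. Then for every channel Λ : M_{d_A}(ℂ) → M_{d_B}(ℂ), the channel robustness computed over subchannels equals that computed over channels: inf{λ ≥ 0 : there exist PPT-binding subchannels Γ, Θ with Λ + λΓ = (1+λ)Θ} = R_KE(Λ). -/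
/-!
A PPT-binding subchannel `Γ` becomes a PPT-binding channel once its trace deficit is sent to a
fixed state `σ`: `Γ' X = Γ X + (Tr X - Tr (Γ X)) • σ`. The deficit `X ↦ Tr X - Tr (Γ X)` is a
positive functional, hence completely positive, so `id ⊗ Γ'` adds to the PPT output of `id ⊗ Γ`
a matrix `D ⊗ σ` with `D` positive semidefinite, whose partial transpose `D ⊗ σᵀ` is again
positive semidefinite. Since `Λ` preserves the trace, taking traces in `Λ + λ Γ = (1 + λ) Θ` gives
`λ (Tr - Tr ∘ Γ) = (1 + λ) (Tr - Tr ∘ Θ)`, so the completions satisfy the same identity and the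
two sets of admissible `λ` coincide.
-/

open Matrix
open scoped ComplexOrder

section Defs

variable {ιA ιB : Type*}

/-- Partial transpose on the second tensor factor. -/
def ptranspose (M : Matrix (ιA × ιB) (ιA × ιB) ℂ) : Matrix (ιA × ιB) (ιA × ιB) ℂ :=
  Matrix.of fun p q => M (p.1, q.2) (q.1, p.2)

/-- PPT matrix: both it and its partial transpose are positive semidefinite. -/
def IsPPT [Fintype ιA] [Fintype ιB] (M : Matrix (ιA × ιB) (ιA × ιB) ℂ) : Prop :=
  M.PosSemidef ∧ (ptranspose M).PosSemidef

/-- A quantum state: positive semidefinite with trace one. -/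
def IsState {ι : Type*} [Fintype ι] (ρ : Matrix ι ι ℂ) : Prop :=
  ρ.PosSemidef ∧ ρ.trace = 1

/-- The map `id_R ⊗ Φ` acting on matrices over a product index. -/
def idTensor (ιR : Type*) (Φ : Matrix ιA ιA ℂ →ₗ[ℂ] Matrix ιB ιB ℂ) :
    Matrix (ιR × ιA) (ιR × ιA) ℂ →ₗ[ℂ] Matrix (ιR × ιB) (ιR × ιB) ℂ where
  toFun M := Matrix.of fun p q => Φ (Matrix.of fun a b => M (p.1, a) (q.1, b)) p.2 q.2
  map_add' M N := by
    funext p q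
    show Φ ((Matrix.of fun a b => M (p.1, a) (q.1, b)) + (Matrix.of fun a b => N (p.1, a) (q.1, b))) p.2 q.2 = _
    rw [map_add]
    rfl
  map_smul' c M := by
    funext p q
    show Φ (c • (Matrix.of fun a b => M (p.1, a) (q.1, b))) p.2 q.2 = _
    rw [_root_.map_smul]
    rfl

/-- Complete positivity. -/
def IsCP [Fintype ιA] [Fintype ιB] (Φ : Matrix ιA ιA ℂ →ₗ[ℂ] Matrix ιB ιB ℂ) : Prop :=
  ∀ (k : ℕ) (X : Matrix (Fin k × ιA) (Fin k × ιA) ℂ), X.PosSemidef →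
    ((idTensor (Fin k) Φ) X).PosSemidef

/-- Trace preservation. -/
def IsTP [Fintype ιA] [Fintype ιB] (Φ : Matrix ιA ιA ℂ →ₗ[ℂ] Matrix ιB ιB ℂ) : Prop :=
  ∀ X : Matrix ιA ιA ℂ, (Φ X).trace = X.trace

/-- A quantum channel: completely positive and trace preserving. -/
def IsChannel [Fintype ιA] [Fintype ιB] (Φ : Matrix ιA ιA ℂ →ₗ[ℂ] Matrix ιB ιB ℂ) : Prop :=
  IsCP Φ ∧ IsTP Φ

/-- A map is PPT-binding if `id_k ⊗ Φ` sends positive semidefinite matrices to PPT matrices. -/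
def PPTBinding [Fintype ιA] [Fintype ιB] (Φ : Matrix ιA ιA ℂ →ₗ[ℂ] Matrix ιB ιB ℂ) : Prop :=
  ∀ (k : ℕ) (X : Matrix (Fin k × ιA) (Fin k × ιA) ℂ), X.PosSemidef →
    IsPPT ((idTensor (Fin k) Φ) X)

/-- A PPT-binding channel. -/
def PPTBindingChannel [Fintype ιA] [Fintype ιB] (Φ : Matrix ιA ιA ℂ →ₗ[ℂ] Matrix ιB ιB ℂ) : Prop :=
  IsChannel Φ ∧ PPTBinding Φ

/-- The channel robustness with respect to PPT-binding channels. -/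
noncomputable def RKE [Fintype ιA] [Fintype ιB] (Λ : Matrix ιA ιA ℂ →ₗ[ℂ] Matrix ιB ιB ℂ) : ℝ :=
  sInf {l : ℝ | 0 ≤ l ∧ ∃ Γ Θ : Matrix ιA ιA ℂ →ₗ[ℂ] Matrix ιB ιB ℂ,
    PPTBindingChannel Γ ∧ PPTBindingChannel Θ ∧ Λ + (l : ℂ) • Γ = ((1 + l : ℝ) : ℂ) • Θ}

/-- The PPT robustness of a state. -/
noncomputable def RPPT [Fintype ιA] [Fintype ιB] (ρ : Matrix (ιA × ιB) (ιA × ιB) ℂ) : ℝ :=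
  sInf {t : ℝ | ∃ δ : Matrix (ιA × ιB) (ιA × ιB) ℂ, IsPPT δ ∧ IsPPT (ρ + δ) ∧ (δ.trace).re = t}

/-- Operator norm of a matrix. -/
noncomputable def opNorm {ι : Type*} [Fintype ι] [DecidableEq ι] (M : Matrix ι ι ℂ) : ℝ :=
  ‖Matrix.toEuclideanCLM (𝕜 := ℂ) (n := ι) M‖

/-- Trace norm of a matrix. -/
noncomputable def traceNorm {ι : Type*} [Fintype ι] [DecidableEq ι] (M : Matrix ι ι ℂ) : ℝ :=
  (((Matrix.posSemidef_conjTranspose_mul_self M).1.eigenvectorUnitary.1 *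
      diagonal (((↑) : ℝ → ℂ) ∘ (√·) ∘ (Matrix.posSemidef_conjTranspose_mul_self M).1.eigenvalues) *
      (star (Matrix.posSemidef_conjTranspose_mul_self M).1.eigenvectorUnitary : Matrix ι ι ℂ)).trace).re

end Defs

/-- A PPT-binding subchannel: completely positive, trace non-increasing, and PPT-binding. -/
def PPTBindingSubchannel {ιA ιB : Type*} [Fintype ιA] [Fintype ιB]
    (Γ : Matrix ιA ιA ℂ →ₗ[ℂ] Matrix ιB ιB ℂ) : Prop :=
  IsCP Γ ∧ (∀ ρ : Matrix ιA ιA ℂ, IsState ρ → ((Γ ρ).trace).re ≤ 1) ∧ PPTBinding Γ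

open scoped Kronecker

namespace Matrix

-- Over `ℂ` hermiticity need not be assumed: a real quadratic form determines a Hermitian matrix.
theorem posSemidef_of_dotProduct_mulVec_nonneg {n : Type*} [Fintype n] {A : Matrix n n ℂ}
    (hA : ∀ x, 0 ≤ star x ⬝ᵥ A *ᵥ x) : A.PosSemidef := by
  classical
  rw [← isPositive_toEuclideanLin_iff, LinearMap.isPositive_iff_complex]
  intro x
  obtain ⟨r, hr, hrx⟩ := RCLike.nonneg_iff_exists_ofReal.mp (hA x.ofLp)
  simp only [EuclideanSpace.inner_eq_star_dotProduct, toLpLin_apply]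
  rw [dotProduct_star, dotProduct_comm, ← hrx]
  simpa using hr

theorem PosSemidef.map_comp_symm {R ι : Type*} [Fintype R] [Fintype ι]
    {f : Matrix ι ι ℂ →ₗ[ℂ] ℂ} (hf : ∀ Y : Matrix ι ι ℂ, Y.PosSemidef → 0 ≤ f Y)
    {X : Matrix (R × ι) (R × ι) ℂ} (hX : X.PosSemidef) :
    (((comp R R ι ι ℂ).symm X).map f).PosSemidef := by
  classical
  refine posSemidef_of_dotProduct_mulVec_nonneg fun x => ?_
  let A : Matrix (R × ι) ι ℂ := of fun pa b => x pa.1 * (1 : Matrix ι ι ℂ) pa.2 b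
  have hA : Aᴴ * X * A = ∑ p, ∑ q, (star (x p) * x q) • (comp R R ι ι ℂ).symm X p q := by
    ext a b
    simp only [A, mul_apply, conjTranspose_apply, of_apply, Fintype.sum_prod_type, sum_apply,
      smul_apply, comp_symm_apply, one_apply, mul_ite, ite_mul, mul_one, mul_zero, zero_mul,
      apply_ite (star : ℂ → ℂ), star_zero, Finset.sum_ite_eq', Finset.mem_univ, if_true,
      Finset.sum_mul, smul_eq_mul]
    rw [Finset.sum_comm]
    exact Finset.sum_congr rfl fun p _ => Finset.sum_congr rfl fun q _ => by ring
  have hform : star x ⬝ᵥ ((comp R R ι ι ℂ).symm X).map f *ᵥ x = f (Aᴴ * X * A) := by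
    simp only [hA, dotProduct, mulVec, map_apply, Pi.star_apply, map_sum, map_smul, smul_eq_mul,
      Finset.mul_sum]
    exact Finset.sum_congr rfl fun p _ => Finset.sum_congr rfl fun q _ => by ring
  exact hform ▸ hf _ (hX.conjTranspose_mul_mul_same A)

end Matrix

theorem exists_isState (ι : Type*) [Fintype ι] [Nonempty ι] : ∃ σ : Matrix ι ι ℂ, IsState σ := by
  classical
  refine ⟨diagonal (Pi.single (Classical.arbitrary ι) 1), ?_, ?_⟩
  · exact posSemidef_diagonal_iff.mpr fun i => by
      by_cases h : i = Classical.arbitrary ι <;> simp [h]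
  · simp [trace_diagonal]

section
variable {ιA ιB : Type*}

theorem ptranspose_kronecker {ιR : Type*} (A : Matrix ιR ιR ℂ) (B : Matrix ιB ιB ℂ) :
    ptranspose (A ⊗ₖ B) = A ⊗ₖ Bᵀ :=
  rfl

theorem idTensor_smulRight (ιR : Type*) (f : Matrix ιA ιA ℂ →ₗ[ℂ] ℂ) (σ : Matrix ιB ιB ℂ)
    (X : Matrix (ιR × ιA) (ιR × ιA) ℂ) :
    idTensor ιR (f.smulRight σ) X = ((comp ιR ιR ιA ιA ℂ).symm X).map f ⊗ₖ σ :=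
  rfl

variable [Fintype ιA] [Fintype ιB]

theorem IsPPT.add {M N : Matrix (ιA × ιB) (ιA × ιB) ℂ} (hM : IsPPT M) (hN : IsPPT N) :
    IsPPT (M + N) :=
  ⟨hM.1.add hN.1, hM.2.add hN.2⟩

theorem IsCP.posSemidef_apply {Φ : Matrix ιA ιA ℂ →ₗ[ℂ] Matrix ιB ιB ℂ} (hΦ : IsCP Φ)
    {X : Matrix ιA ιA ℂ} (hX : X.PosSemidef) : (Φ X).PosSemidef :=
  (hΦ 1 _ (hX.submatrix Prod.snd)).submatrix fun b => ((0 : Fin 1), b)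

theorem PPTBinding.isCP {Φ : Matrix ιA ιA ℂ →ₗ[ℂ] Matrix ιB ιB ℂ} (hΦ : PPTBinding Φ) :
    IsCP Φ :=
  fun k X hX => (hΦ k X hX).1

theorem PPTBinding.add {Φ Ψ : Matrix ιA ιA ℂ →ₗ[ℂ] Matrix ιB ιB ℂ} (hΦ : PPTBinding Φ)
    (hΨ : PPTBinding Ψ) : PPTBinding (Φ + Ψ) :=
  fun k X hX => (hΦ k X hX).add (hΨ k X hX)

theorem pptBinding_smulRight {f : Matrix ιA ιA ℂ →ₗ[ℂ] ℂ}
    (hf : ∀ Y : Matrix ιA ιA ℂ, Y.PosSemidef → 0 ≤ f Y) {σ : Matrix ιB ιB ℂ}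
    (hσ : σ.PosSemidef) : PPTBinding (f.smulRight σ) := fun k X hX => by
  rw [IsPPT, idTensor_smulRight, ptranspose_kronecker]
  have hD := hX.map_comp_symm hf
  exact ⟨hD.kronecker hσ, hD.kronecker hσ.transpose⟩

theorem isTP_of_isEmpty [IsEmpty ιA] (Φ : Matrix ιA ιA ℂ →ₗ[ℂ] Matrix ιB ιB ℂ) : IsTP Φ :=
  fun X => by rw [Subsingleton.elim X 0, map_zero, trace_zero, trace_zero]

theorem IsTP.isEmpty [IsEmpty ιB] {Φ : Matrix ιA ιA ℂ →ₗ[ℂ] Matrix ιB ιB ℂ} (hΦ : IsTP Φ) :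
    IsEmpty ιA := by
  classical
  have h := hΦ 1
  rw [trace_eq_zero_of_isEmpty, trace_one, eq_comm, Nat.cast_eq_zero] at h
  exact Fintype.card_eq_zero_iff.mp h

theorem PPTBindingChannel.pptBindingSubchannel {Φ : Matrix ιA ιA ℂ →ₗ[ℂ] Matrix ιB ιB ℂ}
    (hΦ : PPTBindingChannel Φ) : PPTBindingSubchannel Φ :=
  ⟨hΦ.1.1, fun ρ hρ => by rw [hΦ.1.2, hρ.2, Complex.one_re], hΦ.2⟩

def traceDeficit (Φ : Matrix ιA ιA ℂ →ₗ[ℂ] Matrix ιB ιB ℂ) : Matrix ιA ιA ℂ →ₗ[ℂ] ℂ :=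
  traceLinearMap ιA ℂ ℂ - traceLinearMap ιB ℂ ℂ ∘ₗ Φ

theorem traceDeficit_apply (Φ : Matrix ιA ιA ℂ →ₗ[ℂ] Matrix ιB ιB ℂ) (X : Matrix ιA ιA ℂ) :
    traceDeficit Φ X = X.trace - (Φ X).trace :=
  rfl

theorem traceDeficit_nonneg {Φ : Matrix ιA ιA ℂ →ₗ[ℂ] Matrix ιB ιB ℂ} (hΦ : IsCP Φ)
    (hTr : ∀ ρ : Matrix ιA ιA ℂ, IsState ρ → ((Φ ρ).trace).re ≤ 1)
    {Y : Matrix ιA ιA ℂ} (hY : Y.PosSemidef) : 0 ≤ traceDeficit Φ Y := by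
  have htY := Complex.eq_re_of_ofReal_le (r := 0) (by simpa using hY.trace_nonneg)
  have hsY := Complex.eq_re_of_ofReal_le (r := 0)
    (by simpa using (hΦ.posSemidef_apply hY).trace_nonneg)
  set t := Y.trace.re
  set s := (Φ Y).trace.re
  suffices s ≤ t by
    rw [traceDeficit_apply, htY, hsY, ← Complex.ofReal_sub]
    exact Complex.zero_le_real.mpr (sub_nonneg.mpr this)
  rcases (show 0 ≤ t from Complex.zero_le_real.mp (htY ▸ hY.trace_nonneg)).eq_or_lt with ht | ht
  · have hY0 : Y = 0 := hY.trace_eq_zero_iff.mp (by rw [htY, ← ht, Complex.ofReal_zero])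
    simp [s, hY0, ← ht]
  · have hρ : IsState (((t⁻¹ : ℝ) : ℂ) • Y) :=
      ⟨hY.smul (Complex.zero_le_real.mpr (inv_pos.mpr ht).le), by
        rw [trace_smul, htY, smul_eq_mul, ← Complex.ofReal_mul, inv_mul_cancel₀ ht.ne',
          Complex.ofReal_one]⟩
    have := hTr _ hρ
    rwa [map_smul, trace_smul, hsY, smul_eq_mul, ← Complex.ofReal_mul, Complex.ofReal_re,
      inv_mul_le_iff₀ ht, mul_one] at this

def traceCompletion (Φ : Matrix ιA ιA ℂ →ₗ[ℂ] Matrix ιB ιB ℂ) (σ : Matrix ιB ιB ℂ) :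
    Matrix ιA ιA ℂ →ₗ[ℂ] Matrix ιB ιB ℂ :=
  Φ + (traceDeficit Φ).smulRight σ

theorem isTP_traceCompletion (Φ : Matrix ιA ιA ℂ →ₗ[ℂ] Matrix ιB ιB ℂ) {σ : Matrix ιB ιB ℂ}
    (hσ : σ.trace = 1) : IsTP (traceCompletion Φ σ) := fun X => by
  simp only [traceCompletion, LinearMap.add_apply, LinearMap.smulRight_apply, traceDeficit_apply,
    trace_add, trace_smul, hσ, smul_eq_mul, mul_one, add_sub_cancel]

theorem PPTBindingSubchannel.traceCompletion {Γ : Matrix ιA ιA ℂ →ₗ[ℂ] Matrix ιB ιB ℂ}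
    (hΓ : PPTBindingSubchannel Γ) {σ : Matrix ιB ιB ℂ} (hσ : IsState σ) :
    PPTBindingChannel (traceCompletion Γ σ) := by
  obtain ⟨hCP, hTr, hΓ⟩ := hΓ
  have h := hΓ.add (pptBinding_smulRight (fun Y => traceDeficit_nonneg hCP hTr) hσ.1)
  exact ⟨⟨h.isCP, isTP_traceCompletion Γ hσ.2⟩, h⟩

theorem add_smul_traceCompletion_eq {Λ Γ Θ : Matrix ιA ιA ℂ →ₗ[ℂ] Matrix ιB ιB ℂ} {a b : ℂ}
    (hab : 1 + a = b) (hΛ : IsTP Λ) (h : Λ + a • Γ = b • Θ) (σ : Matrix ιB ιB ℂ) :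
    Λ + a • traceCompletion Γ σ = b • traceCompletion Θ σ := by
  ext1 X
  have hX := LinearMap.congr_fun h X
  simp only [LinearMap.add_apply, LinearMap.smul_apply] at hX
  have hdef : a * traceDeficit Γ X = b * traceDeficit Θ X := by
    have := congrArg trace hX
    rw [trace_add, trace_smul, trace_smul, hΛ] at this
    simp only [traceDeficit_apply, smul_eq_mul] at this ⊢
    linear_combination (-1 : ℂ) * this + (X.trace) * hab
  simp only [traceCompletion, LinearMap.add_apply, LinearMap.smul_apply, LinearMap.smulRight_apply,
    smul_add, ← add_assoc, hX, smul_smul, hdef]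

theorem exists_pptBindingChannel_eq_of_pptBindingSubchannel
    {Λ Γ Θ : Matrix ιA ιA ℂ →ₗ[ℂ] Matrix ιB ιB ℂ} {a b : ℂ} (hab : 1 + a = b) (hΛ : IsTP Λ)
    (hΓ : PPTBindingSubchannel Γ) (hΘ : PPTBindingSubchannel Θ) (h : Λ + a • Γ = b • Θ) :
    ∃ Γ' Θ' : Matrix ιA ιA ℂ →ₗ[ℂ] Matrix ιB ιB ℂ,
      PPTBindingChannel Γ' ∧ PPTBindingChannel Θ' ∧ Λ + a • Γ' = b • Θ' := by
  rcases isEmpty_or_nonempty ιB with hB | hB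
  · have := hΛ.isEmpty
    exact ⟨Γ, Θ, ⟨⟨hΓ.1, isTP_of_isEmpty Γ⟩, hΓ.2.2⟩, ⟨⟨hΘ.1, isTP_of_isEmpty Θ⟩, hΘ.2.2⟩, h⟩
  · obtain ⟨σ, hσ⟩ := exists_isState ιB
    exact ⟨_, _, hΓ.traceCompletion hσ, hΘ.traceCompletion hσ,
      add_smul_traceCompletion_eq hab hΛ h σ⟩

end

/-- **Subchannel formulation of the channel robustness.** For every channel
`Λ : M_{d_A}(ℂ) → M_{d_B}(ℂ)`, the robustness computed over PPT-binding subchannels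
equals the robustness computed over PPT-binding channels. -/
theorem RKE_subchannel_eq {dA dB : ℕ}
    (Λ : Matrix (Fin dA) (Fin dA) ℂ →ₗ[ℂ] Matrix (Fin dB) (Fin dB) ℂ)
    (hΛ : IsChannel Λ) :
    sInf {l : ℝ | 0 ≤ l ∧ ∃ Γ Θ : Matrix (Fin dA) (Fin dA) ℂ →ₗ[ℂ] Matrix (Fin dB) (Fin dB) ℂ,
      PPTBindingSubchannel Γ ∧ PPTBindingSubchannel Θ ∧
      Λ + (l : ℂ) • Γ = ((1 + l : ℝ) : ℂ) • Θ} = RKE Λ := by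
  refine congrArg sInf (Set.ext fun l => and_congr_right fun _ => ⟨?_, ?_⟩)
  · rintro ⟨Γ, Θ, hΓ, hΘ, h⟩
    exact exists_pptBindingChannel_eq_of_pptBindingSubchannel (by push_cast; ring) hΛ.2 hΓ hΘ h
  · rintro ⟨Γ, Θ, hΓ, hΘ, h⟩
    exact ⟨Γ, Θ, hΓ.pptBindingSubchannel, hΘ.pptBindingSubchannel, h⟩
end

section
/- For every bipartite state ρ on ℂ^{d_A} ⊗ ℂ^{d_B} and every n ∈ ℕ, the tempered negativity is supermultiplicative under tensor powers: N_τ(ρ^{⊗n}) ≥ N_τ(ρ)^n, where ρ^{⊗n} is regarded as a bipartite state with respect to the A^n : B^n cut and the partial transpose is taken on all B factors. -/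
/-!
If `X` is feasible for `N_τ(ρ)`, then `X^{⊗n}` is feasible for `N_τ(ρ^{⊗n})` with value
`Tr(Xρ)^n`: partial transposition commutes with tensor powers, traces factorize, and the operator
norm is multiplicative on tensor powers. The upper bound `‖X^{⊗n}‖ ≤ ‖X‖^n` comes from
`‖A ⊗ B‖ ≤ ‖A‖‖B‖`, the lower bound from testing `X^{⊗n}` on product vectors `v^{⊗n}`.
Since `0` is always feasible and `t ↦ tⁿ` is monotone on `[0, ∞)`, the supremum of the values
`tⁿ` is at least `N_τ(ρ)^n`.
-/

open Matrix
open scoped ComplexOrder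

section Defs

variable {ιA ιB : Type*}

/-- The tempered negativity `N_τ(ρ|ω)`. -/
noncomputable def temperedNegRel [Fintype ιA] [Fintype ιB] [DecidableEq ιA] [DecidableEq ιB]
    (ρ ω : Matrix (ιA × ιB) (ιA × ιB) ℂ) : ℝ :=
  sSup {t : ℝ | ∃ X : Matrix (ιA × ιB) (ιA × ιB) ℂ, X.IsHermitian ∧
    opNorm (ptranspose X) ≤ 1 ∧ opNorm X = ((X * ω).trace).re ∧ t = ((X * ρ).trace).re}

noncomputable def temperedNeg [Fintype ιA] [Fintype ιB] [DecidableEq ιA] [DecidableEq ιB]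
    (ρ : Matrix (ιA × ιB) (ιA × ιB) ℂ) : ℝ :=
  temperedNegRel ρ ρ

/-- The tempered PPT robustness `R^τ(ρ|ω)`, via `1 + 2 R^τ(ρ|ω) = sup {...}`. -/
noncomputable def temperedRobRel [Fintype ιA] [Fintype ιB] [DecidableEq ιA] [DecidableEq ιB]
    (ρ ω : Matrix (ιA × ιB) (ιA × ιB) ℂ) : ℝ :=
  (sSup {t : ℝ | ∃ X : Matrix (ιA × ιB) (ιA × ιB) ℂ, X.IsHermitian ∧
    (∀ W : Matrix (ιA × ιB) (ιA × ιB) ℂ, IsPPT W → |((X * W).trace).re| ≤ (W.trace).re) ∧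
    opNorm X = ((X * ω).trace).re ∧ t = ((X * ρ).trace).re} - 1) / 2

noncomputable def temperedRob [Fintype ιA] [Fintype ιB] [DecidableEq ιA] [DecidableEq ιB]
    (ρ : Matrix (ιA × ιB) (ιA × ιB) ℂ) : ℝ :=
  temperedRobRel ρ ρ

/-- The channel tempered negativity. -/
noncomputable def chanTemperedNeg [Fintype ιA] [Fintype ιB] [DecidableEq ιA] [DecidableEq ιB]
    (Λ : Matrix ιA ιA ℂ →ₗ[ℂ] Matrix ιB ιB ℂ) : ℝ :=
  sSup {t : ℝ | ∃ ρ : Matrix (ιA × ιA) (ιA × ιA) ℂ, IsState ρ ∧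
    t = temperedNeg ((idTensor ιA Λ) ρ)}

/-- The channel tempered robustness `R^τ(Λ'|Λ)`. -/
noncomputable def chanTemperedRobRel [Fintype ιA] [Fintype ιB] [DecidableEq ιA] [DecidableEq ιB]
    (Λ' Λ : Matrix ιA ιA ℂ →ₗ[ℂ] Matrix ιB ιB ℂ) : ℝ :=
  sSup {t : ℝ | ∃ ρ : Matrix (ιA × ιA) (ιA × ιA) ℂ, IsState ρ ∧
    t = temperedRobRel ((idTensor ιA Λ') ρ) ((idTensor ιA Λ) ρ)}

/-- The diamond norm. -/
noncomputable def diamondNorm [Fintype ιA] [Fintype ιB] [DecidableEq ιA] [DecidableEq ιB]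
    (Φ : Matrix ιA ιA ℂ →ₗ[ℂ] Matrix ιB ιB ℂ) : ℝ :=
  sSup {t : ℝ | ∃ ρ : Matrix (ιA × ιA) (ιA × ιA) ℂ, IsState ρ ∧
    t = traceNorm ((idTensor ιA Φ) ρ)}

/-- The `n`-fold tensor power of a linear map on matrices. -/
noncomputable def tensorPow [Fintype ιA] [DecidableEq ιA] (n : ℕ)
    (Λ : Matrix ιA ιA ℂ →ₗ[ℂ] Matrix ιB ιB ℂ) :
    Matrix (Fin n → ιA) (Fin n → ιA) ℂ →ₗ[ℂ] Matrix (Fin n → ιB) (Fin n → ιB) ℂ where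
  toFun M := Matrix.of fun p q => ∑ a : Fin n → ιA, ∑ b : Fin n → ιA,
      M a b * ∏ i, Λ (Matrix.single (a i) (b i) 1) (p i) (q i)
  map_add' M N := by
    funext p q
    simp [Matrix.add_apply, add_mul, Finset.sum_add_distrib]
  map_smul' c M := by
    funext p q
    simp [Matrix.smul_apply, Finset.mul_sum, mul_assoc]

/-- The `n`-fold tensor power of a bipartite state, regarded as bipartite across the `Aⁿ:Bⁿ` cut. -/
noncomputable def statePow (n : ℕ) (ρ : Matrix (ιA × ιB) (ιA × ιB) ℂ) :
    Matrix ((Fin n → ιA) × (Fin n → ιB)) ((Fin n → ιA) × (Fin n → ιB)) ℂ :=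
  Matrix.of fun p q => ∏ i, ρ (p.1 i, p.2 i) (q.1 i, q.2 i)

/-- The Choi matrix `J_Φ = (1/d_A) ∑_{ij} |i⟩⟨j| ⊗ Φ(|i⟩⟨j|)`. -/
noncomputable def choi [Fintype ιA] [DecidableEq ιA]
    (Φ : Matrix ιA ιA ℂ →ₗ[ℂ] Matrix ιB ιB ℂ) : Matrix (ιA × ιB) (ιA × ιB) ℂ :=
  Matrix.of fun p q => (Fintype.card ιA : ℂ)⁻¹ * Φ (Matrix.single p.1 q.1 1) p.2 q.2


end Defs

open scoped Matrix.Norms.L2Operator Kronecker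
open WithLp (toLp)

lemma Real.csSup_pow_le {S : Set ℝ} {n : ℕ} {c : ℝ} (hS : ∃ t ∈ S, 0 ≤ t)
    (h : ∀ t ∈ S, 0 ≤ t → t ^ n ≤ c) : sSup S ^ n ≤ c := by
  obtain ⟨t₀, ht₀, ht₀_nonneg⟩ := hS
  rcases Nat.eq_zero_or_pos n with rfl | hn
  · simpa using h t₀ ht₀ ht₀_nonneg
  have hc : 0 ≤ c := (pow_nonneg ht₀_nonneg n).trans (h t₀ ht₀ ht₀_nonneg)
  have hroot : ∀ t ∈ S, t ≤ c ^ (n⁻¹ : ℝ) := fun t ht => by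
    rcases lt_or_ge t 0 with ht_neg | ht_nonneg
    · exact ht_neg.le.trans (Real.rpow_nonneg hc _)
    · exact (Real.le_rpow_inv_iff_of_pos ht_nonneg hc (by positivity)).mpr
        (by exact_mod_cast h t ht ht_nonneg)
  calc sSup S ^ n ≤ (c ^ (n⁻¹ : ℝ)) ^ n :=
        pow_le_pow_left₀ (ht₀_nonneg.trans (le_csSup ⟨_, hroot⟩ ht₀)) (csSup_le ⟨t₀, ht₀⟩ hroot) n
    _ = c := Real.rpow_inv_natCast_pow hc hn.ne'

section EuclideanNorm

variable {𝕜 : Type*} [RCLike 𝕜] {m n p : Type*}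

lemma norm_toLp_comp_equiv [Fintype m] [Fintype n] (e : m ≃ n) (v : n → 𝕜) :
    ‖toLp 2 (v ∘ e)‖ = ‖toLp 2 v‖ := by
  simp only [EuclideanSpace.norm_eq, Function.comp_apply]
  rw [e.sum_comp (fun j => ‖v j‖ ^ 2)]

lemma norm_toLp_sq_eq_sum_slices [Fintype m] [Fintype p] (v : m × p → 𝕜) :
    ‖toLp 2 v‖ ^ 2 = ∑ k, ‖toLp 2 (fun i => v (i, k))‖ ^ 2 := by
  simp only [EuclideanSpace.norm_sq_eq, Fintype.sum_prod_type]
  exact Finset.sum_comm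

end EuclideanNorm

namespace Matrix

variable {𝕜 : Type*} [RCLike 𝕜] {l m n p : Type*}

lemma norm_toLp_mulVec_le [Fintype m] [Fintype n] [DecidableEq n] (A : Matrix m n 𝕜)
    (v : n → 𝕜) : ‖toLp 2 (A *ᵥ v)‖ ≤ ‖A‖ * ‖toLp 2 v‖ :=
  A.l2_opNorm_mulVec (toLp 2 v)

lemma l2_opNorm_le_of_forall [Fintype m] [Fintype n] [DecidableEq n] {A : Matrix m n 𝕜} {C : ℝ}
    (hC : 0 ≤ C) (h : ∀ v : n → 𝕜, ‖toLp 2 (A *ᵥ v)‖ ≤ C * ‖toLp 2 v‖) : ‖A‖ ≤ C := by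
  rw [l2_opNorm_def]
  refine ContinuousLinearMap.opNorm_le_bound _ hC fun x => ?_
  simpa [toLpLin_apply] using h x.ofLp

lemma l2_opNorm_reindex_le [Fintype l] [Fintype m] [Fintype n] [Fintype p] [DecidableEq n]
    [DecidableEq p] (e₁ : l ≃ m) (e₂ : n ≃ p) (A : Matrix l n 𝕜) : ‖reindex e₁ e₂ A‖ ≤ ‖A‖ := by
  refine l2_opNorm_le_of_forall (norm_nonneg A) fun v => ?_
  rw [reindex_apply, submatrix_mulVec_equiv, norm_toLp_comp_equiv, ← norm_toLp_comp_equiv e₂ v]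
  exact norm_toLp_mulVec_le A _

lemma l2_opNorm_one_le [Fintype n] [DecidableEq n] : ‖(1 : Matrix n n 𝕜)‖ ≤ 1 :=
  l2_opNorm_le_of_forall zero_le_one fun v => by rw [one_mulVec, one_mul]

lemma blockDiagonal_mulVec [Fintype n] [Fintype p] [DecidableEq p] (M : p → Matrix m n 𝕜)
    (v : n × p → 𝕜) (i : m) (k : p) :
    (blockDiagonal M *ᵥ v) (i, k) = (M k *ᵥ fun j => v (j, k)) i := by
  simp [mulVec, dotProduct, blockDiagonal_apply, Fintype.sum_prod_type, ite_mul]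

lemma l2_opNorm_blockDiagonal_le [Fintype m] [Fintype n] [Fintype p] [DecidableEq n]
    [DecidableEq p] (M : p → Matrix m n 𝕜) {C : ℝ} (hC : 0 ≤ C) (hM : ∀ k, ‖M k‖ ≤ C) :
    ‖blockDiagonal M‖ ≤ C := by
  refine l2_opNorm_le_of_forall hC fun v => ?_
  refine (pow_le_pow_iff_left₀ (norm_nonneg _) (by positivity) two_ne_zero).mp ?_
  rw [mul_pow, norm_toLp_sq_eq_sum_slices, norm_toLp_sq_eq_sum_slices, Finset.mul_sum]
  refine Finset.sum_le_sum fun k _ => ?_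
  simp only [blockDiagonal_mulVec, ← mul_pow]
  exact pow_le_pow_left₀ (norm_nonneg _)
    ((norm_toLp_mulVec_le _ _).trans (by gcongr; exact hM k)) 2

lemma l2_opNorm_kronecker_le [Fintype l] [Fintype m] [Fintype n] [Fintype p]
    [DecidableEq m] [DecidableEq n] [DecidableEq p]
    (A : Matrix l m 𝕜) (B : Matrix n p 𝕜) : ‖A ⊗ₖ B‖ ≤ ‖A‖ * ‖B‖ := by
  have hsplit : A ⊗ₖ B = A ⊗ₖ (1 : Matrix n n 𝕜) * (1 : Matrix m m 𝕜) ⊗ₖ B := by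
    rw [← mul_kronecker_mul, Matrix.mul_one, Matrix.one_mul]
  rw [hsplit, kronecker_one, one_kronecker]
  refine (l2_opNorm_mul _ _).trans (mul_le_mul ?_ ?_ (norm_nonneg _) (norm_nonneg _))
  · exact l2_opNorm_blockDiagonal_le _ (norm_nonneg A) fun _ => le_rfl
  · exact (l2_opNorm_reindex_le _ _ _).trans
      (l2_opNorm_blockDiagonal_le _ (norm_nonneg B) fun _ => le_rfl)

end Matrix

section StatePow

open Matrix

variable {A B : Type*}

lemma prod_sum_eq_sum_pairs [Fintype A] [Fintype B] {R : Type*} [CommSemiring R] (n : ℕ)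
    (g : Fin n → A × B → R) :
    ∏ i, ∑ x, g i x = ∑ P : (Fin n → A) × (Fin n → B), ∏ i, g i (P.1 i, P.2 i) := by
  rw [Fintype.prod_sum]
  exact Fintype.sum_equiv (Equiv.arrowProdEquivProdArrow (Fin n) (fun _ => A) (fun _ => B)) _ _
    fun _ => rfl

def vecPow (n : ℕ) (v : A × B → ℂ) : (Fin n → A) × (Fin n → B) → ℂ :=
  fun P => ∏ i, v (P.1 i, P.2 i)

lemma statePow_mulVec_vecPow [Fintype A] [Fintype B] (n : ℕ) (X : Matrix (A × B) (A × B) ℂ)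
    (v : A × B → ℂ) : statePow n X *ᵥ vecPow n v = vecPow n (X *ᵥ v) := by
  funext P
  simp only [mulVec, dotProduct, statePow, vecPow, of_apply, ← Finset.prod_mul_distrib]
  exact (prod_sum_eq_sum_pairs n fun i x => X (P.1 i, P.2 i) x * v x).symm

lemma norm_toLp_vecPow [Fintype A] [Fintype B] (n : ℕ) (v : A × B → ℂ) :
    ‖toLp 2 (vecPow n v)‖ = ‖toLp 2 v‖ ^ n := by
  refine (pow_left_inj₀ (norm_nonneg _) (by positivity) two_ne_zero).mp ?_
  rw [← pow_mul, mul_comm, pow_mul, EuclideanSpace.norm_sq_eq, EuclideanSpace.norm_sq_eq,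
    ← Fin.prod_const, prod_sum_eq_sum_pairs]
  simp [vecPow, Finset.prod_pow]

lemma trace_statePow_mul [Fintype A] [Fintype B] (n : ℕ) (X ρ : Matrix (A × B) (A × B) ℂ) :
    (statePow n X * statePow n ρ).trace = (X * ρ).trace ^ n := by
  simp only [trace, diag, mul_apply]
  rw [← Fin.prod_const, prod_sum_eq_sum_pairs]
  refine Finset.sum_congr rfl fun P _ => ?_
  rw [prod_sum_eq_sum_pairs]
  simp [statePow, Finset.prod_mul_distrib]

lemma isHermitian_statePow {X : Matrix (A × B) (A × B) ℂ} (hX : X.IsHermitian) (n : ℕ) :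
    (statePow n X).IsHermitian := by
  ext P Q
  simp only [conjTranspose_apply, statePow, of_apply, star_prod]
  exact Finset.prod_congr rfl fun i _ => congrFun (congrFun hX _) _

lemma ptranspose_statePow (n : ℕ) (X : Matrix (A × B) (A × B) ℂ) :
    ptranspose (statePow n X) = statePow n (ptranspose X) := rfl

lemma statePow_zero [DecidableEq A] [DecidableEq B] (X : Matrix (A × B) (A × B) ℂ) :
    statePow 0 X = 1 := by
  ext P Q
  rw [Subsingleton.elim P Q]
  simp [statePow]

def statePowSuccEquiv (A B : Type*) (n : ℕ) :
    (A × B) × (Fin n → A) × (Fin n → B) ≃ (Fin (n + 1) → A) × (Fin (n + 1) → B) :=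
  (Equiv.prodProdProdComm A B (Fin n → A) (Fin n → B)).trans
    ((Fin.consEquiv fun _ => A).prodCongr (Fin.consEquiv fun _ => B))

lemma statePow_succ [Fintype A] [Fintype B] (n : ℕ) (X : Matrix (A × B) (A × B) ℂ) :
    statePow (n + 1) X =
      reindex (statePowSuccEquiv A B n) (statePowSuccEquiv A B n) (X ⊗ₖ statePow n X) := by
  ext P Q
  simp [statePow, statePowSuccEquiv, Fin.prod_univ_succ, Fin.tail]

lemma l2_opNorm_statePow_le [Fintype A] [Fintype B] [DecidableEq A] [DecidableEq B] (n : ℕ)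
    (X : Matrix (A × B) (A × B) ℂ) : ‖statePow n X‖ ≤ ‖X‖ ^ n := by
  induction n with
  | zero => rw [statePow_zero, pow_zero]; exact l2_opNorm_one_le
  | succ n ih =>
    rw [statePow_succ, pow_succ']
    exact (l2_opNorm_reindex_le _ _ _).trans
      ((l2_opNorm_kronecker_le _ _).trans (mul_le_mul_of_nonneg_left ih (norm_nonneg X)))

lemma pow_l2_opNorm_le_l2_opNorm_statePow [Fintype A] [Fintype B] [DecidableEq A]
    [DecidableEq B] (n : ℕ) (X : Matrix (A × B) (A × B) ℂ) : ‖X‖ ^ n ≤ ‖statePow n X‖ := by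
  rw [cstar_norm_def, ← ContinuousLinearMap.sSup_unit_ball_eq_norm]
  refine Real.csSup_pow_le ⟨0, ⟨0, Metric.mem_ball_self zero_lt_one, by simp⟩, le_rfl⟩ ?_
  rintro - ⟨v, hv, rfl⟩ -
  rw [mem_ball_zero_iff] at hv
  calc ‖toEuclideanCLM (𝕜 := ℂ) X v‖ ^ n = ‖toLp 2 (statePow n X *ᵥ vecPow n v.ofLp)‖ := by
        rw [statePow_mulVec_vecPow, norm_toLp_vecPow, toEuclideanCLM_toLp]
    _ ≤ ‖statePow n X‖ * ‖v‖ ^ n := by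
        simpa [norm_toLp_vecPow] using norm_toLp_mulVec_le (statePow n X) (vecPow n v.ofLp)
    _ ≤ ‖statePow n X‖ := mul_le_of_le_one_right (norm_nonneg _)
        (pow_le_one₀ (norm_nonneg _) hv.le)

lemma l2_opNorm_statePow [Fintype A] [Fintype B] [DecidableEq A] [DecidableEq B] (n : ℕ)
    (X : Matrix (A × B) (A × B) ℂ) : ‖statePow n X‖ = ‖X‖ ^ n :=
  (l2_opNorm_statePow_le n X).antisymm (pow_l2_opNorm_le_l2_opNorm_statePow n X)

end StatePow

section TemperedNegativity

open Matrix

lemma opNorm_eq_l2_opNorm {ι : Type*} [Fintype ι] [DecidableEq ι] (M : Matrix ι ι ℂ) :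
    opNorm M = ‖M‖ := rfl

lemma Matrix.IsHermitian.ofReal_re_trace_mul {ι : Type*} [Fintype ι] {X Y : Matrix ι ι ℂ}
    (hX : X.IsHermitian) (hY : Y.IsHermitian) : (((X * Y).trace).re : ℂ) = (X * Y).trace := by
  refine Complex.conj_eq_iff_re.mp ?_
  change star _ = _
  rw [← trace_conjTranspose, conjTranspose_mul, hX.eq, hY.eq, trace_mul_comm]

variable {A B : Type*} [Fintype A] [Fintype B]

lemma trace_ptranspose_mul_ptranspose (X Y : Matrix (A × B) (A × B) ℂ) :
    (ptranspose X * ptranspose Y).trace = (X * Y).trace := by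
  simp only [trace, diag, mul_apply, ptranspose, of_apply, ← Finset.sum_product']
  refine Fintype.sum_equiv
    ⟨fun z => ((z.1.1, z.2.2), (z.2.1, z.1.2)), fun z => ((z.1.1, z.2.2), (z.2.1, z.1.2)),
      fun _ => rfl, fun _ => rfl⟩ _ _ fun _ => rfl

variable [DecidableEq A] [DecidableEq B]

def temperedNegSet (ρ ω : Matrix (A × B) (A × B) ℂ) : Set ℝ :=
  {t : ℝ | ∃ X : Matrix (A × B) (A × B) ℂ, X.IsHermitian ∧
    opNorm (ptranspose X) ≤ 1 ∧ opNorm X = ((X * ω).trace).re ∧ t = ((X * ρ).trace).re}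

lemma temperedNeg_eq_sSup (ρ : Matrix (A × B) (A × B) ℂ) :
    temperedNeg ρ = sSup (temperedNegSet ρ ρ) := rfl

lemma zero_mem_temperedNegSet (ρ ω : Matrix (A × B) (A × B) ℂ) : 0 ∈ temperedNegSet ρ ω :=
  ⟨0, isHermitian_zero, (norm_zero (E := Matrix (A × B) (A × B) ℂ)).trans_le zero_le_one,
    by simp [opNorm_eq_l2_opNorm], by simp⟩

lemma bddAbove_temperedNegSet (ρ ω : Matrix (A × B) (A × B) ℂ) :
    BddAbove (temperedNegSet ρ ω) := by
  let f : Matrix (A × B) (A × B) ℂ →L[ℂ] ℂ :=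
    LinearMap.toContinuousLinearMap (traceLinearMap _ ℂ ℂ ∘ₗ LinearMap.mulRight ℂ (ptranspose ρ))
  refine ⟨‖f‖, ?_⟩
  rintro - ⟨X, -, hXΓ, -, rfl⟩
  calc ((X * ρ).trace).re ≤ ‖(ptranspose X * ptranspose ρ).trace‖ := by
        rw [trace_ptranspose_mul_ptranspose]; exact Complex.re_le_norm _
    _ = ‖f (ptranspose X)‖ := rfl
    _ ≤ ‖f‖ * ‖ptranspose X‖ := f.le_opNorm _
    _ ≤ ‖f‖ := mul_le_of_le_one_right (norm_nonneg f) hXΓ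

lemma pow_mem_temperedNegSet_statePow {ρ : Matrix (A × B) (A × B) ℂ} (hρ : ρ.IsHermitian)
    {t : ℝ} (ht : t ∈ temperedNegSet ρ ρ) (n : ℕ) :
    t ^ n ∈ temperedNegSet (statePow n ρ) (statePow n ρ) := by
  obtain ⟨X, hX, hXΓ, hXnorm, rfl⟩ := ht
  have htrace : (statePow n X * statePow n ρ).trace = ((((X * ρ).trace).re ^ n : ℝ) : ℂ) := by
    rw [trace_statePow_mul, Complex.ofReal_pow, hX.ofReal_re_trace_mul hρ]
  refine ⟨statePow n X, isHermitian_statePow hX n, ?_, ?_, ?_⟩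
  · rw [ptranspose_statePow, opNorm_eq_l2_opNorm, l2_opNorm_statePow]
    exact pow_le_one₀ (norm_nonneg _) hXΓ
  · rw [opNorm_eq_l2_opNorm, l2_opNorm_statePow, htrace, Complex.ofReal_re, ← hXnorm,
      opNorm_eq_l2_opNorm]
  · rw [htrace, Complex.ofReal_re]

end TemperedNegativity

/-- **Supermultiplicativity of the tempered negativity under tensor powers:**
`N_τ(ρ^{⊗n}) ≥ N_τ(ρ)^n` for every bipartite state `ρ`, where `ρ^{⊗n}` is regarded as
bipartite with respect to the `Aⁿ:Bⁿ` cut. -/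
theorem temperedNeg_statePow_supermultiplicative {dA dB : ℕ}
    (ρ : Matrix (Fin dA × Fin dB) (Fin dA × Fin dB) ℂ) (hρ : IsState ρ) (n : ℕ) :
    temperedNeg (statePow n ρ) ≥ (temperedNeg ρ) ^ n := by
  rw [ge_iff_le, temperedNeg_eq_sSup, temperedNeg_eq_sSup]
  refine Real.csSup_pow_le ⟨0, zero_mem_temperedNegSet ρ ρ, le_rfl⟩ fun t ht _ => ?_
  exact le_csSup (bddAbove_temperedNegSet _ _) (pow_mem_temperedNegSet_statePow hρ.1.1 ht n)
end
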